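/- The set of finite sums ∑_j e^{-α_j t}(a_j cos(ω_j t) + b_j sin(ω_j t)) with α_j > 0 is dense (in supremum norm) in the space of continuous real-valued functions on [0,∞) vanishing at infinity. -/
import Mathlib


open Set Filter Polynomial

lemma eval_eq_fin_sum (q : ℝ[X]) (hq : q.coeff 0 = 0) (x : ℝ) :
    q.eval x = ∑ j : Fin q.natDegree, q.coeff (j + 1) * x ^ ((j : ℕ) + 1) := by
  rw [Polynomial.eval_eq_sum_range, Finset.sum_range_succ']
  simp [hq, Fin.sum_univ_eq_sum_range (fun i => q.coeff (i + 1) * x ^ (i + 1))]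

/-- Damped sinusoids with positive decay rates are uniformly dense in the continuous
real-valued functions on `[0,∞)` vanishing at infinity. -/
theorem damped_sinusoids_dense (f : ℝ → ℝ) (hc : ContinuousOn f (Ici 0))
    (h0 : Tendsto f atTop (nhds 0)) (ε : ℝ) (hε : 0 < ε) :
    ∃ (n : ℕ) (a b α ω : Fin n → ℝ), (∀ j, 0 < α j) ∧
      ∀ t ∈ Ici (0:ℝ),
        |f t - ∑ j, Real.exp (-(α j) * t) *
          (a j * Real.cos (ω j * t) + b j * Real.sin (ω j * t))| < ε := by
  classical
  set g : ℝ → ℝ := fun s => if 0 < s then f (-Real.log s) else 0 with hg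
  -- continuity of g on [0,1]
  have hmaps : MapsTo (fun x : ℝ => -Real.log x) (Icc 0 1) (Ici 0) := by
    intro x hx
    simpa using neg_nonneg.mpr (Real.log_nonpos hx.1 hx.2)
  have hgc : ContinuousOn g (Icc 0 1) := by
    intro s hs
    rcases eq_or_lt_of_le hs.1 with h | h
    · -- s = 0
      subst h
      have hgz : g 0 = 0 := by simp [hg]
      rw [ContinuousWithinAt, hgz]
      have hsub : Icc (0:ℝ) 1 ⊆ {0} ∪ Ioi 0 := by
        intro x hx
        rcases eq_or_lt_of_le hx.1 with h | h
        · exact Or.inl (by simp [← h])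
        · exact Or.inr h
      refine Tendsto.mono_left ?_ (nhdsWithin_mono _ hsub)
      rw [nhdsWithin_union, nhdsWithin_singleton]
      refine Tendsto.sup (by simpa [hgz] using tendsto_pure_nhds g 0) ?_
      have hlog : Tendsto (fun x : ℝ => -Real.log x) (nhdsWithin 0 (Ioi 0)) atTop := by
        exact tendsto_neg_atBot_atTop.comp Real.tendsto_log_nhdsGT_zero
      have : Tendsto (fun x : ℝ => f (-Real.log x)) (nhdsWithin 0 (Ioi 0)) (nhds 0) :=
        h0.comp hlog
      refine this.congr' ?_
      filter_upwards [self_mem_nhdsWithin] with x hx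
      simp [hg, show (0:ℝ) < x from hx]
    · -- s > 0
      have hf : ContinuousWithinAt (fun x : ℝ => f (-Real.log x)) (Icc 0 1) s := by
        refine ContinuousWithinAt.comp (hc _ (hmaps hs)) ?_ hmaps
        exact ((Real.continuousAt_log (ne_of_gt h)).neg).continuousWithinAt
      refine hf.congr_of_eventuallyEq ?_ (by simp [hg, h])
      have : ∀ᶠ x in nhdsWithin s (Icc 0 1), 0 < x := by
        apply eventually_nhdsWithin_of_eventually_nhds
        exact Filter.Tendsto.eventually_const_lt h tendsto_id
      filter_upwards [this] with x hx
      simp [hg, hx]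
  obtain ⟨p, hp⟩ := exists_polynomial_near_of_continuousOn 0 1 g hgc (ε/2) (by linarith)
  set q : ℝ[X] := p - C (p.eval 0) with hqdef
  have hq0 : q.coeff 0 = 0 := by simp [hqdef, Polynomial.coeff_sub, Polynomial.coeff_C, Polynomial.coeff_zero_eq_eval_zero]
  have hqev : ∀ s ∈ Icc (0:ℝ) 1, |q.eval s - g s| < ε := by
    intro s hs
    have h1 := hp s hs
    have h2 := hp 0 (by norm_num)
    have hgz : g 0 = 0 := by simp [hg]
    rw [hgz, sub_zero] at h2
    have : q.eval s - g s = (p.eval s - g s) - p.eval 0 := by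
      simp [hqdef]; ring
    rw [this]
    calc |(p.eval s - g s) - p.eval 0| ≤ |p.eval s - g s| + |p.eval 0| := abs_sub _ _
      _ < ε/2 + ε/2 := add_lt_add h1 h2
      _ = ε := by ring
  refine ⟨q.natDegree, fun j => q.coeff (j + 1), fun _ => 0, fun j => (j : ℕ) + 1,
    fun _ => 0, fun j => by positivity, ?_⟩
  intro t ht
  have hexp : Real.exp (-t) ∈ Icc (0:ℝ) 1 :=
    ⟨(Real.exp_pos _).le, Real.exp_le_one_iff.mpr (by simpa using ht)⟩
  have hgexp : g (Real.exp (-t)) = f t := by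
    simp [hg, Real.exp_pos, Real.log_exp]
  have hsum : (∑ j : Fin q.natDegree, Real.exp (-(((j : ℕ) : ℝ) + 1) * t) *
      (q.coeff (j + 1) * Real.cos (0 * t) + 0 * Real.sin (0 * t)))
      = q.eval (Real.exp (-t)) := by
    rw [eval_eq_fin_sum q hq0]
    refine Finset.sum_congr rfl fun j _ => ?_
    have : (-((((j : ℕ) : ℝ)) + 1) * t) = (((j : ℕ) + 1 : ℕ) : ℝ) * (-t) := by
      push_cast; ring
    rw [this, Real.exp_nat_mul]
    simp [mul_comm]
  rw [hsum]
  have := hqev (Real.exp (-t)) hexp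
  rw [hgexp] at this
  rwa [abs_sub_comm]
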